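/- arXiv:2211.08815 — 2 statements merged into one kernel-verified Lean document; each statement's English description precedes it below -/
import Mathlib

section
/- As n → ∞, (R*_n − R_n)/σ_n → 0 in probability, i.e. for every ε > 0, P(|R*_n − R_n| ≥ ε σ_n) → 0. -/
/-!
Off an event of probability at most `n / a²` (Chebyshev, since `Var N_n = n`), the Poisson count
`N_n` lies in the window `[n - a, n + a]`, and there `|R*_n - R_n|` is at most the number of values
first seen during the window. That number has mean
`∑ᵢ ((1 - πᵢ)^(n-a) - (1 - πᵢ)^(n+a)) ≤ 2a ∑ᵢ πᵢ e^{-3nπᵢ/4}` (Markov), and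
`√n ∑ᵢ πᵢ e^{-3nπᵢ/4} = o(σ_n)` because `σ_n² = ∑ᵢ e^{-nπᵢ} (1 - e^{-nπᵢ})`. Taking `a ≈ K √n`
with `K` large makes both contributions small.
-/

open MeasureTheory ProbabilityTheory Filter Topology
open scoped ENNReal Nat

section Analysis

open Real

lemma one_sub_exp_neg_nonneg {y : ℝ} (hy : 0 ≤ y) : 0 ≤ 1 - exp (-y) := by
  simpa using exp_le_one_iff.2 (neg_nonpos.2 hy)

lemma one_sub_exp_neg_le (y : ℝ) : 1 - exp (-y) ≤ y := by
  linarith [one_sub_le_exp_neg y]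

lemma le_one_add_mul_one_sub_exp_neg {y : ℝ} (hy : 0 ≤ y) : y ≤ (1 + y) * (1 - exp (-y)) := by
  have h := add_one_le_exp y
  have h2 : exp (-y) * exp y = 1 := by rw [← exp_add]; simp
  nlinarith [exp_pos (-y)]

lemma exp_neg_eq_exp_neg_half_sq (y : ℝ) : exp (-y) = exp (-(y / 2)) ^ 2 := by
  rw [← exp_nat_mul]; ring_nf

lemma exp_neg_three_halves_mul_eq (y : ℝ) : exp (-(3 / 2) * y) = exp (-(y / 2)) ^ 3 := by
  rw [← exp_nat_mul]; ring_nf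

lemma mul_exp_neg_three_halves_mul_le {y : ℝ} (hy : 0 ≤ y) :
    y * exp (-(3 / 2) * y) ≤ 2 * (exp (-y) * (1 - exp (-y))) := by
  have key := le_one_add_mul_one_sub_exp_neg hy
  rw [exp_neg_eq_exp_neg_half_sq] at key
  rw [exp_neg_three_halves_mul_eq, exp_neg_eq_exp_neg_half_sq y]
  set u := exp (-(y / 2))
  have hu : 0 < u := exp_pos _
  have hlin : (1 + y / 2) * u ≤ 1 := by
    have := add_one_le_exp (y / 2)
    have h2 : u * exp (y / 2) = 1 := by rw [← exp_add]; simp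
    nlinarith
  have hyu : y * u ≤ 2 * (1 - u ^ 2) := by
    have : (1 + y) * (y * u) ≤ (1 + y) * (2 * (1 - u ^ 2)) := by nlinarith
    exact le_of_mul_le_mul_left this (by linarith)
  linear_combination mul_le_mul_of_nonneg_left hyu (sq_nonneg u)

lemma sq_mul_exp_neg_three_halves_mul_le {y : ℝ} (hy : 0 ≤ y) :
    y ^ 2 * exp (-(3 / 2) * y) ≤ 9 * (exp (-y) * (1 - exp (-y))) := by
  have key := le_one_add_mul_one_sub_exp_neg hy
  rw [exp_neg_eq_exp_neg_half_sq] at key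
  rw [exp_neg_three_halves_mul_eq, exp_neg_eq_exp_neg_half_sq y]
  set u := exp (-(y / 2))
  have hu : 0 < u := exp_pos _
  have hquad : (1 + y / 2 + (y / 2) ^ 2 / 2) * u ≤ 1 := by
    have := quadratic_le_exp_of_nonneg (show 0 ≤ y / 2 by positivity)
    have h2 : u * exp (y / 2) = 1 := by rw [← exp_add]; simp
    nlinarith
  have hyu : y ^ 2 * u ≤ 9 * (1 - u ^ 2) := by
    have : (1 + y) * (y ^ 2 * u) ≤ (1 + y) * (9 * (1 - u ^ 2)) := by nlinarith
    exact le_of_mul_le_mul_left this (by linarith)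
  linear_combination mul_le_mul_of_nonneg_left hyu (sq_nonneg u)

lemma sqrt_mul_mul_exp_le_three_mul_sqrt {t p : ℝ} (ht : 0 < t) (hp : 0 ≤ p) :
    √t * (p * exp (-(3 / 4) * t * p)) ≤
      3 * √(exp (-(t * p)) * (1 - exp (-(t * p))) * min p t⁻¹) := by
  have hy : 0 ≤ t * p := mul_nonneg ht.le hp
  have hv : 0 ≤ exp (-(t * p)) * (1 - exp (-(t * p))) :=
    mul_nonneg (exp_pos _).le (one_sub_exp_neg_nonneg hy)
  have hsq : (√t * (p * exp (-(3 / 4) * t * p))) ^ 2 = t * p ^ 2 * exp (-(3 / 2) * (t * p)) := by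
    rw [mul_pow, Real.sq_sqrt ht.le, mul_pow, ← exp_nat_mul]
    ring_nf
  have h3 : ∀ x y, 3 * √(x * y) = √(9 * x * y) := fun x y => by
    rw [mul_assoc 9, Real.sqrt_mul (by norm_num : (0 : ℝ) ≤ 9),
      show (9 : ℝ) = 3 ^ 2 by norm_num, Real.sqrt_sq (by norm_num)]
  rw [h3, Real.le_sqrt (by positivity) (by positivity), hsq,
    mul_min_of_nonneg p t⁻¹ (by positivity : (0 : ℝ) ≤ 9 * (exp (-(t * p)) * (1 - exp (-(t * p)))))]
  refine le_min ?_ ?_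
  · have := mul_exp_neg_three_halves_mul_le hy
    calc t * p ^ 2 * exp (-(3 / 2) * (t * p)) = p * (t * p * exp (-(3 / 2) * (t * p))) := by ring
      _ ≤ p * (2 * (exp (-(t * p)) * (1 - exp (-(t * p))))) := by gcongr
      _ ≤ 9 * (exp (-(t * p)) * (1 - exp (-(t * p)))) * p := by nlinarith
  · have := sq_mul_exp_neg_three_halves_mul_le hy
    calc t * p ^ 2 * exp (-(3 / 2) * (t * p)) = (t * p) ^ 2 * exp (-(3 / 2) * (t * p)) * t⁻¹ := by
          field_simp
      _ ≤ 9 * (exp (-(t * p)) * (1 - exp (-(t * p)))) * t⁻¹ := by gcongr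

lemma one_sub_pow_sub_one_sub_pow_add_le {p : ℝ} (hp0 : 0 ≤ p) (hp1 : p ≤ 1) (c d : ℕ) :
    (1 - p) ^ c - (1 - p) ^ (c + d) ≤ d * p * exp (-(c * p)) := by
  have hq : 0 ≤ 1 - p := by linarith
  have hc : (1 - p) ^ c ≤ exp (-(c * p)) := by
    calc (1 - p) ^ c ≤ exp (-p) ^ c := by gcongr; linarith [add_one_le_exp (-p)]
      _ = exp (-(c * p)) := by rw [← exp_nat_mul]; ring_nf
  have hd : 1 - (1 - p) ^ d ≤ d * p := by
    have := one_add_mul_le_pow (show -2 ≤ -p by linarith) d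
    rw [← sub_eq_add_neg] at this
    linarith
  have hd0 : 0 ≤ 1 - (1 - p) ^ d := by linarith [pow_le_one₀ hq (by linarith : 1 - p ≤ 1) (n := d)]
  calc (1 - p) ^ c - (1 - p) ^ (c + d) = (1 - p) ^ c * (1 - (1 - p) ^ d) := by ring
    _ ≤ exp (-(c * p)) * (d * p) := mul_le_mul hc hd hd0 (exp_pos _).le
    _ = d * p * exp (-(c * p)) := by ring

section Summation

variable {ι : Type*} {p : ι → ℝ}

lemma tsum_le_mul_sqrt_tsum_mul_sqrt_tsum {f g h : ι → ℝ} {c : ℝ} (hc : 0 ≤ c)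
    (hf : 0 ≤ f) (hg : 0 ≤ g) (hh : 0 ≤ h) (hgs : Summable g) (hhs : Summable h)
    (hfgh : ∀ i, f i ≤ c * √(g i * h i)) :
    ∑' i, f i ≤ c * (√(∑' i, g i) * √(∑' i, h i)) := by
  refine Real.tsum_le_of_sum_le hf fun s => ?_
  calc ∑ i ∈ s, f i ≤ c * ∑ i ∈ s, √(g i) * √(h i) := by
        rw [Finset.mul_sum]
        exact Finset.sum_le_sum fun i _ => (hfgh i).trans_eq (by rw [Real.sqrt_mul (hg i)])
    _ ≤ c * (√(∑ i ∈ s, g i) * √(∑ i ∈ s, h i)) :=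
        mul_le_mul_of_nonneg_left (Real.sum_sqrt_mul_sqrt_le s hg hh) hc
    _ ≤ c * (√(∑' i, g i) * √(∑' i, h i)) := by
        gcongr
        · exact hgs.sum_le_tsum s fun i _ => hg i
        · exact hhs.sum_le_tsum s fun i _ => hh i

lemma tendsto_tsum_min_inv_atTop (hp : 0 ≤ p) (hps : Summable p) :
    Tendsto (fun t : ℝ => ∑' i, min (p i) t⁻¹) atTop (𝓝 0) := by
  have h := tendsto_tsum_of_dominated_convergence (𝓕 := atTop) (f := fun t i => min (p i) t⁻¹)
    (g := fun _ => 0) hps (fun i => by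
      simpa only [min_eq_right (show (0 : ℝ) ≤ p i from hp i)] using
        (tendsto_const_nhds (x := p i)).min (tendsto_inv_atTop_zero (𝕜 := ℝ)))
    (by filter_upwards [eventually_gt_atTop 0] with t ht i
        rw [Real.norm_of_nonneg (le_min (hp i) (inv_nonneg.2 ht.le))]
        exact min_le_left _ _)
  simpa using h

lemma summable_exp_neg_mul_one_sub_exp_neg (hp : 0 ≤ p) (hps : Summable p) {t : ℝ}
    (ht : 0 ≤ t) : Summable fun i => exp (-(t * p i)) * (1 - exp (-(t * p i))) := by
  refine (hps.mul_left t).of_nonneg_of_le (fun i => ?_) (fun i => ?_)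
  · exact mul_nonneg (exp_pos _).le (one_sub_exp_neg_nonneg (mul_nonneg ht (hp i)))
  · have h1 : exp (-(t * p i)) ≤ 1 := exp_le_one_iff.2 (neg_nonpos.2 (mul_nonneg ht (hp i)))
    have h2 := one_sub_exp_neg_le (t * p i)
    have h3 := one_sub_exp_neg_nonneg (mul_nonneg ht (hp i))
    nlinarith

/-- Split `√t · p e^{-3tp/4}` by Cauchy–Schwarz into `√(e^{-tp}(1 - e^{-tp}))`, which sums to
the right-hand side, and `√(min p t⁻¹)`, whose square sums to `0` by dominated convergence. -/
theorem isLittleO_sqrt_mul_tsum_mul_exp (hp : 0 ≤ p) (hps : Summable p) :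
    (fun t : ℝ => √t * ∑' i, p i * exp (-(3 / 4) * t * p i)) =o[atTop]
      fun t => √(∑' i, exp (-(t * p i)) * (1 - exp (-(t * p i)))) := by
  rw [Asymptotics.isLittleO_iff]
  intro c hc
  have hsmall : ∀ᶠ t in atTop, 3 * √(∑' i, min (p i) t⁻¹) ≤ c := by
    have h := (tendsto_tsum_min_inv_atTop hp hps).sqrt.const_mul 3
    rw [Real.sqrt_zero, mul_zero] at h
    exact h.eventually (eventually_le_nhds hc)
  filter_upwards [hsmall, eventually_gt_atTop 0] with t hsmall ht
  have hterm : ∀ i, 0 ≤ √t * (p i * exp (-(3 / 4) * t * p i)) := fun i =>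
    mul_nonneg (sqrt_nonneg _) (mul_nonneg (hp i) (exp_pos _).le)
  rw [norm_of_nonneg (by rw [← tsum_mul_left]; exact tsum_nonneg hterm),
    norm_of_nonneg (sqrt_nonneg _), ← tsum_mul_left]
  calc ∑' i, √t * (p i * exp (-(3 / 4) * t * p i))
      ≤ 3 * (√(∑' i, exp (-(t * p i)) * (1 - exp (-(t * p i)))) * √(∑' i, min (p i) t⁻¹)) :=
        tsum_le_mul_sqrt_tsum_mul_sqrt_tsum (by norm_num) hterm
          (fun i => mul_nonneg (exp_pos _).le (one_sub_exp_neg_nonneg (mul_nonneg ht.le (hp i))))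
          (fun i => le_min (hp i) (inv_nonneg.2 ht.le))
          (summable_exp_neg_mul_one_sub_exp_neg hp hps ht.le)
          (hps.of_nonneg_of_le (fun i => le_min (hp i) (inv_nonneg.2 ht.le))
            fun i => min_le_left _ _)
          fun i => sqrt_mul_mul_exp_le_three_mul_sqrt ht (hp i)
    _ ≤ c * √(∑' i, exp (-(t * p i)) * (1 - exp (-(t * p i)))) := by
        nlinarith [sqrt_nonneg (∑' i, exp (-(t * p i)) * (1 - exp (-(t * p i))))]

lemma tsum_one_sub_exp_neg_two_mul_sub (hp : 0 ≤ p) (hps : Summable p) {t : ℝ} (ht : 0 ≤ t) :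
    ∑' i, (1 - exp (-(2 * t) * p i)) - ∑' i, (1 - exp (-t * p i)) =
      ∑' i, exp (-(t * p i)) * (1 - exp (-(t * p i))) := by
  have hsum : ∀ s : ℝ, 0 ≤ s → Summable fun i => 1 - exp (-s * p i) := fun s hs =>
    (hps.mul_left s).of_nonneg_of_le
      (fun i => by rw [neg_mul]; exact one_sub_exp_neg_nonneg (mul_nonneg hs (hp i)))
      (fun i => by rw [neg_mul]; exact one_sub_exp_neg_le _)
  rw [← (hsum _ (by positivity)).tsum_sub (hsum t ht)]
  refine tsum_congr fun i => ?_
  rw [show exp (-(2 * t) * p i) = exp (-(t * p i)) ^ 2 by rw [← exp_nat_mul]; ring_nf, neg_mul]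
  ring

lemma tsum_exp_neg_mul_one_sub_exp_neg_pos (hp : 0 ≤ p) (hps : Summable p) {t : ℝ} (ht : 0 < t)
    {i₀ : ι} (hi₀ : 0 < p i₀) : 0 < ∑' i, exp (-(t * p i)) * (1 - exp (-(t * p i))) :=
  (summable_exp_neg_mul_one_sub_exp_neg hp hps ht.le).tsum_pos
    (fun i => mul_nonneg (exp_pos _).le (one_sub_exp_neg_nonneg (mul_nonneg ht.le (hp i)))) i₀
    (mul_pos (exp_pos _) (sub_pos.2 (exp_lt_one_iff.2 (neg_lt_zero.2 (mul_pos ht hi₀)))))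

end Summation

lemma eventually_exists_window {S V : ℕ → ℝ} (hSV : (fun n : ℕ => √n * S n) =o[atTop] V)
    (hV : ∀ᶠ n in atTop, 0 < V n) {δ : ℝ} (hδ : 0 < δ) :
    ∀ᶠ n : ℕ in atTop, ∃ a : ℕ, 0 < a ∧ 4 * a ≤ n ∧ n / a ^ 2 + 2 * a * S n / V n < δ := by
  set K := max 1 (4 / δ)
  have hK1 : 1 ≤ K := le_max_left _ _
  have hKδ : 1 / K ^ 2 ≤ δ / 4 := by
    have : 4 / δ ≤ K := le_max_right _ _
    calc 1 / K ^ 2 ≤ 1 / K := one_div_le_one_div_of_le (by positivity) (by nlinarith)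
      _ ≤ δ / 4 := by rw [div_le_iff₀ (by positivity)]; rw [div_le_iff₀ hδ] at this; linarith
  have hsqrt : Tendsto (fun n : ℕ => √(n : ℝ)) atTop atTop :=
    tendsto_sqrt_atTop.comp tendsto_natCast_atTop_atTop
  filter_upwards [hV, hSV.bound (show 0 < δ / (8 * K) by positivity),
    hsqrt.eventually_ge_atTop (8 * K)] with n hVn hSn hn
  have hn0 : (0 : ℝ) ≤ n := n.cast_nonneg
  have hsq : √(n : ℝ) ^ 2 = n := sq_sqrt hn0
  have hKn : 1 ≤ K * √n := by nlinarith
  set a := ⌈K * √n⌉₊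
  have ha_ge : K * √n ≤ a := Nat.le_ceil _
  have ha_le : (a : ℝ) ≤ 2 * (K * √n) := by
    linarith [Nat.ceil_lt_add_one (show 0 ≤ K * √n by positivity)]
  have ha_pos : (0 : ℝ) < a := by linarith
  refine ⟨a, by exact_mod_cast ha_pos, by exact_mod_cast (show (4 * a : ℝ) ≤ n by nlinarith), ?_⟩
  rw [norm_mul, norm_of_nonneg (sqrt_nonneg _), norm_of_nonneg hVn.le] at hSn
  have h1 : (n : ℝ) / a ^ 2 ≤ δ / 4 := by
    calc (n : ℝ) / a ^ 2 ≤ n / (K * √n) ^ 2 := by gcongr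
      _ = 1 / K ^ 2 := by
          rw [mul_pow, hsq]; field_simp [show (n : ℝ) ≠ 0 by intro h; simp [h] at hKn; linarith]
      _ ≤ δ / 4 := hKδ
  have h2 : 2 * a * S n / V n ≤ δ / 2 := by
    rw [div_le_iff₀ hVn]
    calc 2 * a * S n ≤ 2 * a * ‖S n‖ := by gcongr; exact le_norm_self _
      _ ≤ 4 * K * (√n * ‖S n‖) := by nlinarith [norm_nonneg (S n)]
      _ ≤ 4 * K * (δ / (8 * K) * V n) := by gcongr
      _ = δ / 2 * V n := by field_simp; ring
  linarith

lemma hasSum_pow_div_factorial (t : ℝ) : HasSum (fun k : ℕ => t ^ k / k !) (exp t) := by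
  rw [exp_eq_exp_ℝ]; exact NormedSpace.expSeries_div_hasSum_exp t

lemma hasSum_mul_pow_div_factorial (t : ℝ) :
    HasSum (fun k : ℕ => (k : ℝ) * (t ^ k / k !)) (t * exp t) := by
  have h := ((hasSum_pow_div_factorial t).mul_left t).congr_fun fun k =>
    show ((k + 1 : ℕ) : ℝ) * (t ^ (k + 1) / (k + 1)!) = t * (t ^ k / k !) by
      push_cast [Nat.factorial_succ, pow_succ]; field_simp
  simpa using (hasSum_nat_add_iff (f := fun k : ℕ => (k : ℝ) * (t ^ k / k !)) 1).1 h

lemma hasSum_mul_sub_one_mul_pow_div_factorial (t : ℝ) :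
    HasSum (fun k : ℕ => (k : ℝ) * (k - 1) * (t ^ k / k !)) (t ^ 2 * exp t) := by
  have h := ((hasSum_pow_div_factorial t).mul_left (t ^ 2)).congr_fun fun k =>
    show ((k + 2 : ℕ) : ℝ) * ((k + 2 : ℕ) - 1) * (t ^ (k + 2) / (k + 2)!) = t ^ 2 * (t ^ k / k !) by
      push_cast [Nat.factorial_succ, pow_succ]; field_simp; ring
  simpa [Finset.sum_range_succ] using
    (hasSum_nat_add_iff (f := fun k : ℕ => (k : ℝ) * (k - 1) * (t ^ k / k !)) 2).1 h

lemma hasSum_sq_sub_mul_poisson (t : ℝ) :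
    HasSum (fun k : ℕ => ((k : ℝ) - t) ^ 2 * (exp (-t) * t ^ k / k !)) t := by
  have h := ((((hasSum_mul_sub_one_mul_pow_div_factorial t).add
    ((hasSum_mul_pow_div_factorial t).mul_left (1 - 2 * t))).add
    ((hasSum_pow_div_factorial t).mul_left (t ^ 2))).mul_left (exp (-t))).congr_fun fun k =>
    show ((k : ℝ) - t) ^ 2 * (exp (-t) * t ^ k / k !) = _ by ring
  have hexp : exp (-t) * exp t = 1 := by rw [← exp_add, neg_add_cancel, exp_zero]
  rwa [show exp (-t) * (t ^ 2 * exp t + (1 - 2 * t) * (t * exp t) + t ^ 2 * exp t) = t by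
    linear_combination t * hexp] at h

lemma measure_le_abs_sub_le_of_poisson {Ω : Type*} [MeasurableSpace Ω] {P : Measure Ω}
    {X : Ω → ℕ} {t : ℝ} (ht : 0 ≤ t)
    (hX : ∀ k : ℕ, P {ω | X ω = k} = ENNReal.ofReal (exp (-t) * t ^ k / k !)) {a : ℝ}
    (ha : 0 < a) : P {ω | a ≤ |(X ω : ℝ) - t|} ≤ ENNReal.ofReal (t / a ^ 2) := by
  have hsum := (hasSum_sq_sub_mul_poisson t).div_const (a ^ 2)
  have hterm : ∀ k : ℕ, P {ω | X ω = k ∧ a ≤ |(k : ℝ) - t|} ≤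
      ENNReal.ofReal (((k : ℝ) - t) ^ 2 * (exp (-t) * t ^ k / k !) / a ^ 2) := by
    intro k
    by_cases hk : a ≤ |(k : ℝ) - t|
    · simp only [hk, and_true, hX k]
      refine ENNReal.ofReal_le_ofReal ?_
      rw [le_div_iff₀ (by positivity)]
      have : a ^ 2 ≤ ((k : ℝ) - t) ^ 2 := by nlinarith [sq_abs ((k : ℝ) - t)]
      have : 0 ≤ exp (-t) * t ^ k / k ! := by positivity
      nlinarith
    · simp [hk]
  calc P {ω | a ≤ |(X ω : ℝ) - t|} ≤ ∑' k, P {ω | X ω = k ∧ a ≤ |(k : ℝ) - t|} := by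
        refine (measure_mono fun ω hω => ?_).trans (measure_iUnion_le _)
        exact Set.mem_iUnion.2 ⟨X ω, rfl, hω⟩
    _ ≤ ∑' k : ℕ, ENNReal.ofReal (((k : ℝ) - t) ^ 2 * (exp (-t) * t ^ k / k !) / a ^ 2) :=
        ENNReal.tsum_le_tsum hterm
    _ = ENNReal.ofReal (t / a ^ 2) := by
        rw [← ENNReal.ofReal_tsum_of_nonneg (fun k => by positivity) hsum.summable, hsum.tsum_eq]

end Analysis

section RandomFinset

variable {Ω α : Type*} {s : Ω → Finset α}

lemma natCast_card_eq_tsum_indicator (ω : Ω) :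
    ((s ω).card : ℝ≥0∞) = ∑' i, {ω | i ∈ s ω}.indicator 1 ω := by
  rw [tsum_eq_sum (s := s ω) fun i hi => by simp [hi],
    Finset.sum_congr rfl fun i hi => Set.indicator_of_mem (show ω ∈ {ω | i ∈ s ω} from hi) _]
  simp

variable [MeasurableSpace Ω] [Countable α]

lemma measurable_natCast_card (hs : ∀ i, MeasurableSet {ω | i ∈ s ω}) :
    Measurable fun ω => ((s ω).card : ℝ≥0∞) := by
  simp_rw [natCast_card_eq_tsum_indicator]
  exact Measurable.tsum fun i => measurable_one.indicator (hs i)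

lemma lintegral_card_eq_tsum_measure_mem {P : Measure Ω} (hs : ∀ i, MeasurableSet {ω | i ∈ s ω}) :
    ∫⁻ ω, ((s ω).card : ℝ≥0∞) ∂P = ∑' i, P {ω | i ∈ s ω} := by
  simp_rw [natCast_card_eq_tsum_indicator]
  rw [lintegral_tsum (f := fun i => {ω | i ∈ s ω}.indicator 1)
    fun i => (measurable_one.indicator (hs i)).aemeasurable]
  simp_rw [lintegral_indicator_one (hs _)]

end RandomFinset

lemma abs_card_sub_card_le_card_sdiff {α : Type*} [DecidableEq α] {s : ℕ → Finset α}
    (hs : Monotone s) {c m n b : ℕ} (hcm : c ≤ m) (hmb : m ≤ b) (hcn : c ≤ n) (hnb : n ≤ b) :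
    |((s m).card : ℝ) - (s n).card| ≤ (s b \ s c).card := by
  have hcard : ∀ {i j}, i ≤ j → ((s i).card : ℝ) ≤ (s j).card := fun h =>
    Nat.cast_le.2 (Finset.card_le_card (hs h))
  rw [Finset.cast_card_sdiff (hs (hcm.trans hmb)), abs_sub_le_iff]
  constructor <;> linarith [hcard hcm, hcard hmb, hcard hcn, hcard hnb]

lemma le_one_of_measure_eq_ofReal {Ω : Type*} [MeasurableSpace Ω] {P : Measure Ω}
    [IsProbabilityMeasure P] {s : Set Ω} {q : ℝ} (h : P s = ENNReal.ofReal q) : q ≤ 1 :=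
  ENNReal.ofReal_le_one.1 (h ▸ prob_le_one)

section Sampling

variable {Ω α : Type*} [DecidableEq α]

/-- The values `{ξ_k ω | k < m}`; the range `R_m` is its cardinality. -/
def sampleValues (ξ : ℕ → Ω → α) (m : ℕ) (ω : Ω) : Finset α :=
  (Finset.range m).image fun k => ξ k ω

lemma monotone_sampleValues (ξ : ℕ → Ω → α) (ω : Ω) : Monotone fun m => sampleValues ξ m ω :=
  fun _ _ h => Finset.image_subset_image (Finset.range_subset_range.2 h)

lemma setOf_not_mem_sampleValues (ξ : ℕ → Ω → α) (m : ℕ) (i : α) :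
    {ω | i ∉ sampleValues ξ m ω} = ⋂ k ∈ Finset.range m, ξ k ⁻¹' {i}ᶜ := by
  ext ω; simp [sampleValues]

lemma setOf_mem_sampleValues_sdiff (ξ : ℕ → Ω → α) (c b : ℕ) (i : α) :
    {ω | i ∈ sampleValues ξ b ω \ sampleValues ξ c ω} =
      {ω | i ∉ sampleValues ξ c ω} \ {ω | i ∉ sampleValues ξ b ω} := by
  ext ω; simp [and_comm]

variable [MeasurableSpace Ω] [MeasurableSpace α] [MeasurableSingletonClass α] {ξ : ℕ → Ω → α}

lemma measurableSet_not_mem_sampleValues (hξ : ∀ k, Measurable (ξ k)) (m : ℕ) (i : α) :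
    MeasurableSet {ω | i ∉ sampleValues ξ m ω} := by
  rw [setOf_not_mem_sampleValues]
  exact Finset.measurableSet_biInter _ fun k _ => hξ k (measurableSet_singleton i).compl

lemma measurableSet_mem_sampleValues_sdiff (hξ : ∀ k, Measurable (ξ k)) (c b : ℕ) (i : α) :
    MeasurableSet {ω | i ∈ sampleValues ξ b ω \ sampleValues ξ c ω} := by
  rw [setOf_mem_sampleValues_sdiff]
  exact (measurableSet_not_mem_sampleValues hξ c i).diff (measurableSet_not_mem_sampleValues hξ b i)

variable {P : Measure Ω} [IsProbabilityMeasure P]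

lemma measure_not_mem_sampleValues (hξ : ∀ k, Measurable (ξ k)) (hind : iIndepFun ξ P) {i : α}
    {q : ℝ} (hq : 0 ≤ q) (hlaw : ∀ k, P {ω | ξ k ω = i} = ENNReal.ofReal q) (m : ℕ) :
    P {ω | i ∉ sampleValues ξ m ω} = ENNReal.ofReal ((1 - q) ^ m) := by
  have hmiss : ∀ k, P (ξ k ⁻¹' {i}ᶜ) = ENNReal.ofReal (1 - q) := fun k => by
    rw [Set.preimage_compl, prob_compl_eq_one_sub (hξ k (measurableSet_singleton i)),
      show P (ξ k ⁻¹' {i}) = _ from hlaw k, ENNReal.ofReal_sub 1 hq, ENNReal.ofReal_one]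
  rw [setOf_not_mem_sampleValues,
    hind.meas_biInter fun k _ => ⟨{i}ᶜ, (measurableSet_singleton i).compl, rfl⟩,
    Finset.prod_congr rfl fun k _ => hmiss k, Finset.prod_const, Finset.card_range,
    ENNReal.ofReal_pow (by linarith [le_one_of_measure_eq_ofReal (hlaw 0)])]

lemma lintegral_card_sampleValues_sdiff [Countable α] (hξ : ∀ k, Measurable (ξ k))
    (hind : iIndepFun ξ P) {p : α → ℝ} (hp : ∀ i, 0 ≤ p i)
    (hlaw : ∀ k i, P {ω | ξ k ω = i} = ENNReal.ofReal (p i)) {c b : ℕ} (hcb : c ≤ b) :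
    ∫⁻ ω, ((sampleValues ξ b ω \ sampleValues ξ c ω).card : ℝ≥0∞) ∂P =
      ∑' i, ENNReal.ofReal ((1 - p i) ^ c - (1 - p i) ^ b) := by
  rw [lintegral_card_eq_tsum_measure_mem (measurableSet_mem_sampleValues_sdiff hξ c b)]
  refine tsum_congr fun i => ?_
  have hmiss := measure_not_mem_sampleValues hξ hind (hp i) (fun k => hlaw k i)
  have hp1 := le_one_of_measure_eq_ofReal (hlaw 0 i)
  have hsub : {ω | i ∉ sampleValues ξ b ω} ⊆ {ω | i ∉ sampleValues ξ c ω} :=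
    fun ω h h' => h (monotone_sampleValues ξ ω hcb h')
  rw [setOf_mem_sampleValues_sdiff, measure_sdiff hsub
      (measurableSet_not_mem_sampleValues hξ b i).nullMeasurableSet (measure_ne_top _ _),
    hmiss, hmiss, ENNReal.ofReal_sub _ (pow_nonneg (by linarith) _)]

end Sampling

section Window

open Real

variable {Ω α : Type*} [DecidableEq α]

lemma abs_card_sampleValues_sub_le_of_abs_sub_lt (ξ : ℕ → Ω → α) (ω : Ω) {m n a : ℕ}
    (h : |(m : ℝ) - n| < a) :
    |((sampleValues ξ m ω).card : ℝ) - (sampleValues ξ n ω).card| ≤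
      (sampleValues ξ (n - a + 2 * a) ω \ sampleValues ξ (n - a) ω).card := by
  obtain ⟨h1, h2⟩ := abs_sub_lt_iff.1 h
  have hm : n < m + a := by exact_mod_cast (by linarith : (n : ℝ) < m + a)
  have hm' : m < n + a := by exact_mod_cast (by linarith : (m : ℝ) < n + a)
  exact abs_card_sub_card_le_card_sdiff (monotone_sampleValues ξ ω) (by omega) (by omega)
    (Nat.sub_le n a) (by omega)

variable [MeasurableSpace Ω] [MeasurableSpace α] [MeasurableSingletonClass α] [Countable α]
  {ξ : ℕ → Ω → α} {P : Measure Ω} [IsProbabilityMeasure P]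

lemma lintegral_card_sampleValues_window_le (hξ : ∀ k, Measurable (ξ k)) (hind : iIndepFun ξ P)
    {p : α → ℝ} (hp : ∀ i, 0 ≤ p i) (hps : Summable p)
    (hlaw : ∀ k i, P {ω | ξ k ω = i} = ENNReal.ofReal (p i)) {n a : ℕ} (han : 4 * a ≤ n) :
    ∫⁻ ω, ((sampleValues ξ (n - a + 2 * a) ω \ sampleValues ξ (n - a) ω).card : ℝ≥0∞) ∂P ≤
      ENNReal.ofReal (2 * a * ∑' i, p i * exp (-(3 / 4) * n * p i)) := by
  have hc : (3 / 4 : ℝ) * n ≤ (n - a : ℕ) := by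
    have : (4 * a : ℝ) ≤ n := by exact_mod_cast han
    rw [Nat.cast_sub (by omega)]
    linarith
  have hterm : ∀ i, (1 - p i) ^ (n - a) - (1 - p i) ^ (n - a + 2 * a) ≤
      2 * a * (p i * exp (-(3 / 4) * n * p i)) := fun i => by
    calc _ ≤ (2 * a : ℕ) * p i * exp (-((n - a : ℕ) * p i)) :=
          one_sub_pow_sub_one_sub_pow_add_le (hp i) (le_one_of_measure_eq_ofReal (hlaw 0 i)) _ _
      _ ≤ 2 * a * (p i * exp (-(3 / 4) * n * p i)) := by
          rw [mul_assoc]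
          push_cast
          gcongr
          · exact hp i
          · nlinarith [mul_le_mul_of_nonneg_right hc (hp i)]
  have hsum : Summable fun i => 2 * a * (p i * exp (-(3 / 4) * n * p i)) :=
    (hps.of_nonneg_of_le (fun i => mul_nonneg (hp i) (exp_pos _).le)
      fun i => mul_le_of_le_one_right (hp i)
        (exp_le_one_iff.2 (by nlinarith [hp i]))).mul_left _
  rw [lintegral_card_sampleValues_sdiff hξ hind hp hlaw (by omega), ← tsum_mul_left,
    ENNReal.ofReal_tsum_of_nonneg (fun i => by positivity [hp i]) hsum]
  gcongr with i
  exact hterm i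

theorem toReal_measure_le_abs_card_sampleValues_sub_le (hξ : ∀ k, Measurable (ξ k))
    (hind : iIndepFun ξ P) {p : α → ℝ} (hp : ∀ i, 0 ≤ p i) (hps : Summable p)
    (hlaw : ∀ k i, P {ω | ξ k ω = i} = ENNReal.ofReal (p i)) {M : Ω → ℕ} {n : ℕ}
    (hM : ∀ k : ℕ, P {ω | M ω = k} = ENNReal.ofReal (exp (-n) * n ^ k / k !)) {a : ℕ}
    (ha : 0 < a) (han : 4 * a ≤ n) {x : ℝ} (hx : 0 < x) :
    (P {ω | x ≤ |((sampleValues ξ (M ω) ω).card : ℝ) - (sampleValues ξ n ω).card|}).toReal ≤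
      n / a ^ 2 + 2 * a * (∑' i, p i * exp (-(3 / 4) * n * p i)) / x := by
  set S := ∑' i, p i * exp (-(3 / 4) * n * p i)
  set A := {ω | (a : ℝ) ≤ |(M ω : ℝ) - n|}
  set B := {ω | ENNReal.ofReal x ≤
    ((sampleValues ξ (n - a + 2 * a) ω \ sampleValues ξ (n - a) ω).card : ℝ≥0∞)}
  have hsub : {ω | x ≤ |((sampleValues ξ (M ω) ω).card : ℝ) - (sampleValues ξ n ω).card|} ⊆
      A ∪ B := fun ω hω => or_iff_not_imp_left.2 fun hA =>
    (ENNReal.ofReal_le_ofReal (hω.trans (abs_card_sampleValues_sub_le_of_abs_sub_lt ξ ω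
      (not_le.1 hA)))).trans_eq (ENNReal.ofReal_natCast _)
  have hPA : P A ≤ ENNReal.ofReal (n / a ^ 2) :=
    measure_le_abs_sub_le_of_poisson n.cast_nonneg hM (by exact_mod_cast ha)
  have hPB : P B ≤ ENNReal.ofReal (2 * a * S / x) := calc
    P B ≤ (∫⁻ ω, ((sampleValues ξ (n - a + 2 * a) ω \ sampleValues ξ (n - a) ω).card : ℝ≥0∞) ∂P) /
        ENNReal.ofReal x :=
      meas_ge_le_lintegral_div (measurable_natCast_card
        (measurableSet_mem_sampleValues_sdiff hξ _ _)).aemeasurable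
        (ENNReal.ofReal_pos.2 hx).ne' ENNReal.ofReal_ne_top
    _ ≤ ENNReal.ofReal (2 * a * S) / ENNReal.ofReal x := by
      gcongr
      exact lintegral_card_sampleValues_window_le hξ hind hp hps hlaw han
    _ = ENNReal.ofReal (2 * a * S / x) := (ENNReal.ofReal_div_of_pos hx).symm
  have hS : 0 ≤ S := tsum_nonneg fun i => mul_nonneg (hp i) (exp_pos _).le
  refine ENNReal.toReal_le_of_le_ofReal (by positivity) ?_
  calc _ ≤ P (A ∪ B) := measure_mono hsub
    _ ≤ P A + P B := measure_union_le _ _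
    _ ≤ ENNReal.ofReal (n / a ^ 2) + ENNReal.ofReal (2 * a * S / x) := add_le_add hPA hPB
    _ = _ := (ENNReal.ofReal_add (by positivity) (by positivity)).symm

end Window

theorem poissonized_range_difference_in_probability_general
    {Ω : Type*} [MeasurableSpace Ω] (P : Measure Ω) [IsProbabilityMeasure P]
    (π : ℕ → ℝ) (hπpos : ∀ i, 0 < π i)
    (hπsum : HasSum π 1)
    (ξ : ℕ → Ω → ℕ) (hξmeas : ∀ k, Measurable (ξ k))
    (hξindep : iIndepFun ξ P)
    (hξlaw : ∀ k i, P {ω | ξ k ω = i} = ENNReal.ofReal (π i))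
    (R : ℕ → Ω → ℕ)
    (hR : ∀ n ω, R n ω = ((Finset.range n).image fun k => ξ k ω).card)
    (μ : ℝ → ℝ) (hμ : ∀ t, μ t = ∑' i, (1 - Real.exp (-t * π i)))
    (σ : ℝ → ℝ) (hσ : ∀ t, σ t = Real.sqrt (μ (2 * t) - μ t))
    -- (N_t) is a standard rate-1 Poisson process:
    (N : ℝ → Ω → ℕ)
    (hN0 : ∀ ω, N 0 ω = 0)
    (hNlaw : ∀ s t : ℝ, 0 ≤ s → s ≤ t → ∀ k : ℕ,
      P {ω | N t ω - N s ω = k} =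
        ENNReal.ofReal (Real.exp (-(t - s)) * (t - s) ^ k / Nat.factorial k)) :
    ∀ ε : ℝ, 0 < ε →
      Tendsto (fun n : ℕ =>
          (P {ω | ε * σ n ≤ |(R (N n ω) ω : ℝ) - (R n ω : ℝ)|}).toReal)
        atTop (𝓝 0) := by
  intro ε hε
  have hπ0 : 0 ≤ π := fun i => (hπpos i).le
  have hπs := hπsum.summable
  have hσn : ∀ n : ℕ,
      σ n = √(∑' i, Real.exp (-(n * π i)) * (1 - Real.exp (-(n * π i)))) := fun n => by
    rw [hσ, hμ, hμ, tsum_one_sub_exp_neg_two_mul_sub hπ0 hπs n.cast_nonneg]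
  have hσpos : ∀ᶠ n : ℕ in atTop, 0 < ε * σ n := by
    filter_upwards [eventually_gt_atTop 0] with n hn
    rw [hσn]
    exact mul_pos hε (Real.sqrt_pos.2 (tsum_exp_neg_mul_one_sub_exp_neg_pos hπ0 hπs
      (Nat.cast_pos.2 hn) (hπpos 0)))
  have hsmall : (fun n : ℕ => √n * ∑' i, π i * Real.exp (-(3 / 4) * n * π i)) =o[atTop]
      fun n => ε * σ n :=
    (((isLittleO_sqrt_mul_tsum_mul_exp hπ0 hπs).comp_tendsto
      tendsto_natCast_atTop_atTop).const_mul_right hε.ne').congr_right fun n => by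
        rw [hσn]; rfl
  have hNn : ∀ n k : ℕ, P {ω | N n ω = k} = ENNReal.ofReal (Real.exp (-n) * n ^ k / k !) :=
    fun n k => by simpa [hN0] using hNlaw 0 n le_rfl n.cast_nonneg k
  refine tendsto_order.2 ⟨fun δ hδ => Eventually.of_forall fun n =>
    hδ.trans_le ENNReal.toReal_nonneg, fun δ hδ => ?_⟩
  filter_upwards [eventually_exists_window hsmall hσpos hδ, hσpos] with n ⟨a, ha, han, hlt⟩ hn
  simp only [hR]
  exact (toReal_measure_le_abs_card_sampleValues_sub_le hξmeas hξindep hπ0 hπs hξlaw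
    (hNn n) ha han hn).trans_lt hlt

/-- `(R*_n − R_n)/σ_n → 0` in probability: for every `ε > 0`,
`P(|R*_n − R_n| ≥ ε σ_n) → 0`, where `R*_t = R_{N_t}` and `(N_t)` is a standard rate-1
Poisson process independent of the i.i.d. sequence `ξ`. -/
theorem poissonized_range_difference_in_probability
    {Ω : Type*} [MeasurableSpace Ω] (P : Measure Ω) [IsProbabilityMeasure P]
    (π : ℕ → ℝ) (hπpos : ∀ i, 0 < π i) (hπmono : ∀ i, π (i + 1) ≤ π i)
    (hπsum : HasSum π 1)
    (ξ : ℕ → Ω → ℕ) (hξmeas : ∀ k, Measurable (ξ k))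
    (hξindep : iIndepFun ξ P)
    (hξlaw : ∀ k i, P {ω | ξ k ω = i} = ENNReal.ofReal (π i))
    (R : ℕ → Ω → ℕ)
    (hR : ∀ n ω, R n ω = ((Finset.range n).image fun k => ξ k ω).card)
    (μ : ℝ → ℝ) (hμ : ∀ t, μ t = ∑' i, (1 - Real.exp (-t * π i)))
    (σ : ℝ → ℝ) (hσ : ∀ t, σ t = Real.sqrt (μ (2 * t) - μ t))
    -- (N_t) is a standard rate-1 Poisson process:
    (N : ℝ → Ω → ℕ) (hNmeas : ∀ t, Measurable (N t))
    (hN0 : ∀ ω, N 0 ω = 0)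
    (hNmono : ∀ ω, Monotone fun t => N t ω)
    (hNlaw : ∀ s t : ℝ, 0 ≤ s → s ≤ t → ∀ k : ℕ,
      P {ω | N t ω - N s ω = k} =
        ENNReal.ofReal (Real.exp (-(t - s)) * (t - s) ^ k / Nat.factorial k))
    (hNincr : ∀ (m : ℕ) (t : ℕ → ℝ), (∀ i, 0 ≤ t i) → Monotone t →
      iIndepFun
        (fun i : Fin m => fun ω => N (t (i + 1)) ω - N (t i) ω) P)
    -- the process N is independent of the sequence ξ:
    (hNξ : Indep (⨆ t : ℝ, MeasurableSpace.comap (N t) inferInstance)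
        (⨆ k : ℕ, MeasurableSpace.comap (ξ k) inferInstance) P) :
    ∀ ε : ℝ, 0 < ε →
      Tendsto (fun n : ℕ =>
          (P {ω | ε * σ n ≤ |(R (N n ω) ω : ℝ) - (R n ω : ℝ)|}).toReal)
        atTop (𝓝 0) :=
  poissonized_range_difference_in_probability_general P π hπpos hπsum ξ hξmeas hξindep hξlaw R hR μ
    hμ σ hσ N hN0 hNlaw
end

section
/- Define π_i = 2[(1/2)^{i!} − (1/2)^{(i+1)!}] for all i ≥ 1; this defines a probability distribution on the positive integers with π_i ≥ π_{i+1} > 0, and for it liminf_{n→∞} n^p · σ_n² = 0 for every p > 0. -/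
open Filter Topology

/-!
Write `a k = 2^{-(k+1)!}` (`halfPowFactorial k`), so that `π i = 2 (a i - a (i+1))`, the tail
`∑_{i > k} π i` equals `2 a (k+1) = 2 (a k)^{k+2}`, and `a i ≤ π i`. At time `t = (a k)^{-2}`
each of the boxes `i ≤ k` has `t π i ≥ (a k)^{-1}`, so it contributes at most `exp (-(a k)^{-1})`
to `μ(2t) - μ(t)`, while the boxes `i > k` contribute at most `t · 2 (a k)^{k+2} = 2 (a k)^k`.
After multiplication by `t^p = (a k)^{-2p}` both contributions still tend to `0`, so
`n^p σ_n² → 0` along `n = (a k)^{-2}`.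
-/

lemma Antitone.hasSum_sub_succ {a : ℕ → ℝ} (ha : Antitone a) (h0 : Tendsto a atTop (𝓝 0)) :
    HasSum (fun i => a i - a (i + 1)) (a 0) := by
  rw [hasSum_iff_tendsto_nat_of_nonneg fun i => sub_nonneg.2 (ha i.le_succ)]
  simp_rw [Finset.sum_range_sub']
  simpa using h0.const_sub (a 0)

lemma liminf_eq_zero_of_tendsto_comp {F : ℕ → ℝ} (hF : ∀ n, 0 ≤ F n) {N : ℕ → ℕ}
    (hN : Tendsto N atTop atTop) (h : Tendsto (F ∘ N) atTop (𝓝 0)) :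
    liminf F atTop = 0 := by
  have hbdd : IsBoundedUnder (· ≥ ·) atTop F := isBoundedUnder_of ⟨0, hF⟩
  have hcob : IsCoboundedUnder (· ≥ ·) atTop F :=
    IsCoboundedUnder.of_frequently_le (a := 1)
      (hN.frequently (h.eventually (ge_mem_nhds one_pos)).frequently)
  refine le_antisymm ?_ (le_liminf_of_le hcob (Eventually.of_forall hF))
  exact (hN.liminf_le_liminf_comp h.isCoboundedUnder_ge hbdd).trans_eq h.liminf_eq

section Occupancy

open Real

lemma exp_neg_sub_exp_neg_two_mul_nonneg {y : ℝ} (hy : 0 ≤ y) :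
    0 ≤ exp (-y) - exp (-(2 * y)) :=
  sub_nonneg.2 (exp_le_exp.2 (by linarith))

-- `exp (-y) - exp (-2y) = exp (-y) (1 - exp (-y)) ≤ 1 - exp (-y) ≤ y`
lemma exp_neg_sub_exp_neg_two_mul_le {y : ℝ} (hy : 0 ≤ y) : exp (-y) - exp (-(2 * y)) ≤ y := by
  have h2 : exp (-(2 * y)) = exp (-y) * exp (-y) := by rw [← exp_add]; ring_nf
  have h1 : exp (-y) ≤ 1 := exp_le_one_iff.2 (by linarith)
  nlinarith [one_sub_le_exp_neg y, exp_pos (-y)]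

noncomputable def occupancyMean (w : ℕ → ℝ) (t : ℝ) : ℝ := ∑' i, (1 - exp (-t * w i))

variable {w : ℕ → ℝ} {t : ℝ}

lemma summable_one_sub_exp_neg_mul (hw : ∀ i, 0 ≤ w i) (hs : Summable w) (ht : 0 ≤ t) :
    Summable fun i => 1 - exp (-t * w i) := by
  refine (hs.mul_left t).of_nonneg_of_le (fun i => ?_) (fun i => ?_) <;> rw [neg_mul]
  · exact sub_nonneg.2 (exp_le_one_iff.2 (neg_nonpos.2 (mul_nonneg ht (hw i))))
  · linarith [one_sub_le_exp_neg (t * w i)]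

lemma occupancyMean_two_mul_sub (hw : ∀ i, 0 ≤ w i) (hs : Summable w) (ht : 0 ≤ t) :
    occupancyMean w (2 * t) - occupancyMean w t =
      ∑' i, (exp (-(t * w i)) - exp (-(2 * (t * w i)))) := by
  rw [occupancyMean, occupancyMean, ← (summable_one_sub_exp_neg_mul hw hs (by positivity)).tsum_sub
    (summable_one_sub_exp_neg_mul hw hs ht)]
  exact tsum_congr fun i => by ring_nf

lemma occupancyMean_two_mul_sub_nonneg (hw : ∀ i, 0 ≤ w i) (hs : Summable w) (ht : 0 ≤ t) :
    0 ≤ occupancyMean w (2 * t) - occupancyMean w t := by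
  rw [occupancyMean_two_mul_sub hw hs ht]
  exact tsum_nonneg fun i => exp_neg_sub_exp_neg_two_mul_nonneg (mul_nonneg ht (hw i))

lemma occupancyMean_two_mul_sub_le (hw : ∀ i, 0 ≤ w i) (hanti : Antitone w) (hs : Summable w)
    (ht : 0 ≤ t) (m : ℕ) :
    occupancyMean w (2 * t) - occupancyMean w t ≤
      (m + 1) * exp (-(t * w m)) + t * ∑' i, w (i + (m + 1)) := by
  set g : ℕ → ℝ := fun i => exp (-(t * w i)) - exp (-(2 * (t * w i)))
  have hg : Summable g := by
    refine ((summable_one_sub_exp_neg_mul hw hs (by positivity : 0 ≤ 2 * t)).sub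
      (summable_one_sub_exp_neg_mul hw hs ht)).congr fun i => ?_
    simp only [g]; ring_nf
  have head : ∑ i ∈ Finset.range (m + 1), g i ≤ (m + 1) * exp (-(t * w m)) := by
    have hterm : ∀ i ∈ Finset.range (m + 1), g i ≤ exp (-(t * w m)) := fun i hi => by
      have him : w m ≤ w i := hanti (Nat.lt_succ_iff.1 (Finset.mem_range.1 hi))
      have : exp (-(t * w i)) ≤ exp (-(t * w m)) := exp_le_exp.2 (by nlinarith)
      linarith [exp_pos (-(2 * (t * w i)))]
    simpa using Finset.sum_le_card_nsmul _ _ _ hterm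
  have tail : ∑' i, g (i + (m + 1)) ≤ t * ∑' i, w (i + (m + 1)) := by
    rw [← tsum_mul_left]
    exact ((summable_nat_add_iff (m + 1)).2 hg).tsum_le_tsum
      (fun i => exp_neg_sub_exp_neg_two_mul_le (mul_nonneg ht (hw _)))
      (((summable_nat_add_iff (m + 1)).2 hs).mul_left t)
  rw [occupancyMean_two_mul_sub hw hs ht, ← hg.sum_add_tsum_nat_add (m + 1)]
  linarith

end Occupancy

noncomputable def halfPowFactorial (i : ℕ) : ℝ := 2⁻¹ ^ (i + 1).factorial

noncomputable def factorialWeight (i : ℕ) : ℝ :=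
  2 * (halfPowFactorial i - halfPowFactorial (i + 1))

lemma halfPowFactorial_pos (i : ℕ) : 0 < halfPowFactorial i := by
  unfold halfPowFactorial; positivity

lemma halfPowFactorial_le_one (i : ℕ) : halfPowFactorial i ≤ 1 :=
  pow_le_one₀ (by norm_num) (by norm_num)

lemma halfPowFactorial_succ (i : ℕ) : halfPowFactorial (i + 1) = halfPowFactorial i ^ (i + 2) := by
  rw [halfPowFactorial, halfPowFactorial, ← pow_mul, Nat.factorial_succ (i + 1), mul_comm]

lemma two_mul_halfPowFactorial_succ_le (i : ℕ) :
    2 * halfPowFactorial (i + 1) ≤ halfPowFactorial i := by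
  have hle : (i + 1).factorial + 1 ≤ (i + 2).factorial := by
    rw [Nat.factorial_succ (i + 1)]; nlinarith [Nat.factorial_pos (i + 1)]
  have := pow_le_pow_of_le_one (by norm_num : (0 : ℝ) ≤ 2⁻¹) (by norm_num) hle
  rw [pow_succ] at this
  unfold halfPowFactorial
  linarith

lemma antitone_halfPowFactorial : Antitone halfPowFactorial :=
  antitone_nat_of_succ_le fun i => by
    linarith [two_mul_halfPowFactorial_succ_le i, halfPowFactorial_pos (i + 1)]

lemma tendsto_halfPowFactorial : Tendsto halfPowFactorial atTop (𝓝 0) :=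
  (tendsto_pow_atTop_nhds_zero_of_lt_one (by norm_num) (by norm_num)).comp
    ((tendsto_atTop_mono Nat.self_le_factorial tendsto_id).comp (tendsto_add_atTop_nat 1))

lemma inv_halfPowFactorial (k : ℕ) :
    (halfPowFactorial k)⁻¹ = ((2 ^ (k + 1).factorial : ℕ) : ℝ) := by
  simp [halfPowFactorial]

lemma add_one_le_two_pow_factorial (k : ℕ) : k + 1 ≤ 2 ^ (k + 1).factorial :=
  Nat.lt_two_pow_self.le.trans (Nat.pow_le_pow_right two_pos (Nat.self_le_factorial _))

lemma tendsto_inv_halfPowFactorial_atTop :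
    Tendsto (fun k => (halfPowFactorial k)⁻¹) atTop atTop := by
  simp_rw [inv_halfPowFactorial]
  exact tendsto_natCast_atTop_atTop.comp
    (tendsto_atTop_mono add_one_le_two_pow_factorial (tendsto_add_atTop_nat 1))

lemma hasSum_factorialWeight_nat_add (m : ℕ) :
    HasSum (fun i => factorialWeight (i + m)) (2 * halfPowFactorial m) := by
  have := (antitone_halfPowFactorial.comp_monotone (add_left_mono (a := m))).hasSum_sub_succ
    (tendsto_halfPowFactorial.comp (tendsto_add_atTop_nat m))
  simpa [factorialWeight, add_right_comm] using this.mul_left 2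

lemma hasSum_factorialWeight : HasSum factorialWeight 1 := by
  simpa [halfPowFactorial] using hasSum_factorialWeight_nat_add 0

lemma halfPowFactorial_le_factorialWeight (i : ℕ) : halfPowFactorial i ≤ factorialWeight i := by
  unfold factorialWeight; linarith [two_mul_halfPowFactorial_succ_le i]

lemma factorialWeight_pos (i : ℕ) : 0 < factorialWeight i :=
  (halfPowFactorial_pos i).trans_le (halfPowFactorial_le_factorialWeight i)

lemma factorialWeight_succ_le (i : ℕ) : factorialWeight (i + 1) ≤ factorialWeight i := by
  unfold factorialWeight
  linarith [two_mul_halfPowFactorial_succ_le i, halfPowFactorial_pos (i + 2)]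

section Asymptotics

open Real

lemma occupancyMean_factorialWeight_two_mul_sub_le (k : ℕ) :
    occupancyMean factorialWeight (2 * (halfPowFactorial k)⁻¹ ^ 2) -
        occupancyMean factorialWeight ((halfPowFactorial k)⁻¹ ^ 2) ≤
      (k + 1) * exp (-(halfPowFactorial k)⁻¹) + 2 * halfPowFactorial k ^ k := by
  have ha := halfPowFactorial_pos k
  have hb := occupancyMean_two_mul_sub_le (fun i => (factorialWeight_pos i).le)
    (antitone_nat_of_succ_le factorialWeight_succ_le) hasSum_factorialWeight.summable
    (sq_nonneg (halfPowFactorial k)⁻¹) k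
  rw [(hasSum_factorialWeight_nat_add (k + 1)).tsum_eq, halfPowFactorial_succ] at hb
  have htail : (halfPowFactorial k)⁻¹ ^ 2 * (2 * halfPowFactorial k ^ (k + 2)) =
      2 * halfPowFactorial k ^ k := by
    field_simp; ring
  have hhead : (halfPowFactorial k)⁻¹ ≤ (halfPowFactorial k)⁻¹ ^ 2 * factorialWeight k := by
    calc (halfPowFactorial k)⁻¹ = (halfPowFactorial k)⁻¹ ^ 2 * halfPowFactorial k := by
          field_simp
      _ ≤ _ := by gcongr; exact halfPowFactorial_le_factorialWeight k
  calc _ ≤ _ := hb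
    _ ≤ _ := by rw [htail]; gcongr

lemma tendsto_inv_halfPowFactorial_rpow_mul_exp (p : ℝ) :
    Tendsto (fun k : ℕ =>
      (halfPowFactorial k)⁻¹ ^ (2 * p) * ((k + 1) * exp (-(halfPowFactorial k)⁻¹)))
      atTop (𝓝 0) := by
  refine squeeze_zero (fun k => ?_) (fun k => ?_)
    ((tendsto_rpow_mul_exp_neg_mul_atTop_nhds_zero (2 * p + 1) 1 one_pos).comp
      tendsto_inv_halfPowFactorial_atTop)
  · have := inv_pos.2 (halfPowFactorial_pos k)
    positivity
  simp only [Function.comp_apply]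
  set x := (halfPowFactorial k)⁻¹ with hx_eq
  have hx : 0 < x := inv_pos.2 (halfPowFactorial_pos k)
  have hkx : (k + 1 : ℝ) ≤ x := by
    rw [hx_eq, inv_halfPowFactorial]; exact_mod_cast add_one_le_two_pow_factorial k
  rw [neg_one_mul, rpow_add hx, rpow_one]
  have := mul_le_mul_of_nonneg_left hkx (by positivity : 0 ≤ x ^ (2 * p) * exp (-x))
  linarith

lemma tendsto_inv_halfPowFactorial_rpow_mul_pow (p : ℝ) :
    Tendsto (fun k : ℕ => (halfPowFactorial k)⁻¹ ^ (2 * p) * halfPowFactorial k ^ k)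
      atTop (𝓝 0) := by
  refine squeeze_zero' (Eventually.of_forall fun k => ?_) ?_ tendsto_halfPowFactorial
  · have := halfPowFactorial_pos k
    positivity
  filter_upwards [eventually_ge_atTop ⌈2 * p + 1⌉₊] with k hk
  have ha := halfPowFactorial_pos k
  have hk' : 2 * p + 1 ≤ k := Nat.ceil_le.1 hk
  rw [inv_rpow ha.le, ← rpow_neg ha.le, ← rpow_natCast, ← rpow_add ha]
  simpa using rpow_le_rpow_of_exponent_ge ha (halfPowFactorial_le_one k)
    (by linarith : (1 : ℝ) ≤ -(2 * p) + k)

lemma tendsto_rpow_mul_occupancyMean_factorialWeight_two_mul_sub (p : ℝ) :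
    Tendsto (fun k : ℕ => ((halfPowFactorial k)⁻¹ ^ 2) ^ p *
      (occupancyMean factorialWeight (2 * (halfPowFactorial k)⁻¹ ^ 2) -
        occupancyMean factorialWeight ((halfPowFactorial k)⁻¹ ^ 2))) atTop (𝓝 0) := by
  have hlim := (tendsto_inv_halfPowFactorial_rpow_mul_exp p).add
    ((tendsto_inv_halfPowFactorial_rpow_mul_pow p).const_mul 2)
  rw [mul_zero, add_zero] at hlim
  refine squeeze_zero (fun k => ?_) (fun k => ?_) hlim
  · exact mul_nonneg (by positivity) (occupancyMean_two_mul_sub_nonneg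
      (fun i => (factorialWeight_pos i).le) hasSum_factorialWeight.summable (sq_nonneg _))
  have hx := inv_pos.2 (halfPowFactorial_pos k)
  have hpow : ((halfPowFactorial k)⁻¹ ^ 2) ^ p = (halfPowFactorial k)⁻¹ ^ (2 * p) := by
    rw [← rpow_natCast, ← rpow_mul hx.le, Nat.cast_ofNat]
  rw [hpow]
  refine (mul_le_mul_of_nonneg_left (occupancyMean_factorialWeight_two_mul_sub_le k)
    (rpow_nonneg hx.le (2 * p))).trans_eq ?_
  ring

end Asymptotics

/-- The weights `π_i = 2[(1/2)^{i!} − (1/2)^{(i+1)!}]`, `i ≥ 1` (here indexed by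
`i : ℕ` representing the positive integer `i+1`), define a probability distribution
on the positive integers with `π_i ≥ π_{i+1} > 0`, for which
`liminf_{n→∞} n^p · σ_n² = 0` for every `p > 0`. -/
theorem example_distribution_liminf_zero
    (π : ℕ → ℝ)
    (hπ : ∀ i, π i = 2 * (((2 : ℝ)⁻¹) ^ (Nat.factorial (i + 1)) -
      ((2 : ℝ)⁻¹) ^ (Nat.factorial (i + 2))))
    (μ : ℝ → ℝ) (hμ : ∀ t, μ t = ∑' i, (1 - Real.exp (-t * π i))) :
    HasSum π 1 ∧ (∀ i, 0 < π i) ∧ (∀ i, π (i + 1) ≤ π i) ∧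
      ∀ p : ℝ, 0 < p →
        Filter.liminf (fun n : ℕ => (n : ℝ) ^ p * (μ (2 * n) - μ n)) atTop = 0 := by
  obtain rfl : π = factorialWeight := funext hπ
  obtain rfl : μ = occupancyMean factorialWeight := funext hμ
  refine ⟨hasSum_factorialWeight, factorialWeight_pos, factorialWeight_succ_le, fun p _ => ?_⟩
  have hw := fun i => (factorialWeight_pos i).le
  have hN (k : ℕ) : (((2 ^ (k + 1).factorial) ^ 2 : ℕ) : ℝ) = (halfPowFactorial k)⁻¹ ^ 2 := by
    simp [inv_halfPowFactorial]
  refine liminf_eq_zero_of_tendsto_comp (N := fun k => (2 ^ (k + 1).factorial) ^ 2)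
    (fun n => mul_nonneg (by positivity)
      (occupancyMean_two_mul_sub_nonneg hw hasSum_factorialWeight.summable n.cast_nonneg))
    (tendsto_atTop_mono (fun k => (add_one_le_two_pow_factorial k).trans
      (Nat.le_self_pow two_ne_zero _)) (tendsto_add_atTop_nat 1)) ?_
  simpa [Function.comp_def, hN] using tendsto_rpow_mul_occupancyMean_factorialWeight_two_mul_sub p
end
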